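/- arXiv:2509.21252 — 5 statements merged into one kernel-verified Lean document; each statement's English description precedes it below -/
import Mathlib

section
/- For all integers r ≥ 2, h ≥ 1, k ≥ 0, l ≥ 0 satisfying k + l + h ≤ r − 1, the rational number F(r,k,l,h) := Σ_{1 ≤ j ≤ s ≤ r} ((s+1−j)/(s(s+1))) · Σ_{0 ≤ c ≤ j−1} Σ_{0 ≤ d ≤ s−j} (−1)^{c+d} · C(j−1,c) · C(s−j,d) · C(c,k) · C(d+1,l) · C(c+d+1,h) is equal to 0. -/
/-!
Extend the sums over `c` and `d` to `range r` (the binomials vanish beyond) and pull them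
outside. With `e = s - j`, the weight `s + 1 - j` is `e + 1` and
`(e + 1) C(e, d) = (d + 1) C(e + 1, d + 1)`, so the sum over `j` is an upper Vandermonde
convolution, `(d + 1) C(s + 1, c + d + 2)`. As
`C(n + 2, m + 2) / ((n + 1)(n + 2)) = C(n, m) / ((m + 1)(m + 2))`, dividing by `s (s + 1)` leaves
`C(s - 1, c + d)` over a denominator that depends only on `m = c + d`, and the sum over `s` is a
hockey stick, `C(r, m + 1)`. Regrouping along `c + d = m`, the identity
`n C(n, l) = (l + 1) C(n, l + 1) + l C(n, l)`, another convolution and the same ratio identity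
turn `F` into a combination of the sums `Σ_m (-1)^m C(m, K) C(m + 1, h) C(r, m + 1)` with
`K = k + l` and `K = k + l - 1`. Since `C(r, m + 1) C(m + 1, h) = C(r, h) C(r - h, m + 1 - h)`,
each of them is, up to sign, an `(r - h)`-th finite difference of the polynomial
`i ↦ C(i + h - 1, K)` of degree `K < r - h`, hence zero.
-/

open Finset

namespace Nat

/-- Upper Vandermonde convolution. -/
theorem sum_antidiagonal_choose_mul_choose (a b n : ℕ) :
    ∑ p ∈ antidiagonal n, p.1.choose a * p.2.choose b = (n + 1).choose (a + b + 1) := by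
  induction n generalizing b with
  | zero =>
    rw [Finset.Nat.antidiagonal_zero, sum_singleton]
    rcases a with _ | a <;> rcases b with _ | b <;> simp [choose_succ_succ, ← add_assoc]
  | succ n ih =>
    rw [Finset.Nat.sum_antidiagonal_succ', choose_succ_succ' (n + 1)]
    rcases b with _ | b
    · simpa [add_comm] using ih 0
    · simp only [choose_succ_succ' _ b, mul_add, sum_add_distrib, ih]
      simp [add_assoc]

theorem sum_antidiagonal_choose_mul_succ_choose_succ (a b n : ℕ) :
    ∑ p ∈ antidiagonal n, p.1.choose a * (p.2 + 1).choose (b + 1) =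
      (n + 2).choose (a + b + 2) := by
  have h := sum_antidiagonal_choose_mul_choose a (b + 1) (n + 1)
  rw [Finset.Nat.sum_antidiagonal_succ'] at h
  simpa [← add_assoc] using h

theorem sum_antidiagonal_succ_mul_choose_mul_choose (a b n : ℕ) :
    ∑ p ∈ antidiagonal n, (p.2 + 1) * (p.1.choose a * p.2.choose b) =
      (b + 1) * (n + 2).choose (a + b + 2) := by
  rw [← sum_antidiagonal_choose_mul_succ_choose_succ, mul_sum]
  refine sum_congr rfl fun p _ => ?_
  rw [mul_left_comm, add_one_mul_choose_eq]
  ring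

theorem self_mul_choose_eq (n l : ℕ) :
    n * n.choose l = (l + 1) * n.choose (l + 1) + l * n.choose l := by
  rcases le_or_gt l n with hl | hl
  · rw [mul_comm (l + 1), choose_succ_right_eq]
    nth_rewrite 1 [← Nat.sub_add_cancel hl]
    ring
  · simp [choose_eq_zero_of_lt hl, choose_eq_zero_of_lt (hl.trans (lt_succ_self l))]

theorem sum_antidiagonal_choose_mul_succ_mul_choose (k l m : ℕ) :
    ∑ p ∈ antidiagonal m, p.1.choose k * ((p.2 + 1) * (p.2 + 1).choose l) =
      (l + 1) * (m + 2).choose (k + l + 2) + l * (m + 2).choose (k + l + 1) := by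
  simp only [self_mul_choose_eq, mul_add, sum_add_distrib, mul_left_comm _ (l + 1),
    mul_left_comm _ l, ← mul_sum, sum_antidiagonal_choose_mul_succ_choose_succ]
  rcases l with _ | l
  · simp
  · rw [sum_antidiagonal_choose_mul_succ_choose_succ]
    ring_nf

theorem sum_range_choose_eq_choose_succ (r m : ℕ) :
    ∑ n ∈ range r, n.choose m = r.choose (m + 1) := by
  induction r with
  | zero => simp
  | succ r ih => rw [sum_range_succ, ih, choose_succ_succ' r m, add_comm]

theorem cast_choose_add_two_div (n m : ℕ) :
    ((n + 2).choose (m + 2) : ℚ) / ((n + 1) * (n + 2)) = n.choose m / ((m + 1) * (m + 2)) := by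
  rw [div_eq_div_iff (by positivity) (by positivity)]
  have h1 := add_one_mul_choose_eq (n + 1) (m + 1)
  have h2 := add_one_mul_choose_eq n m
  have h : (n + 2).choose (m + 2) * ((m + 1) * (m + 2)) = n.choose m * ((n + 1) * (n + 2)) := by
    nlinarith
  exact_mod_cast h

end Nat

namespace Finset

theorem sum_Icc_one_eq_sum_range {M : Type*} [AddCommMonoid M] (f : ℕ → M) (n : ℕ) :
    ∑ j ∈ Icc 1 n, f j = ∑ i ∈ range n, f (i + 1) := by
  rw [range_eq_Ico, sum_Ico_add', ← Ico_add_one_right_eq_Icc]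

theorem sum_range_choose_mul_of_lt {R : Type*} [Semiring R] {a n N : ℕ} (ha : a < n)
    (hn : n ≤ N) (g : ℕ → R) :
    ∑ c ∈ range n, (a.choose c : R) * g c = ∑ c ∈ range N, (a.choose c : R) * g c := by
  refine sum_subset (range_subset_range.2 hn) fun c _ hc => ?_
  rw [Nat.choose_eq_zero_of_lt (by rw [mem_range] at hc; omega), Nat.cast_zero, zero_mul]

theorem sum_range_sum_range_mul_eq_sum_antidiagonal {R : Type*} [Semiring R] {r : ℕ}
    (φ : ℕ → R) (ψ : ℕ → ℕ → R) (hφ : ∀ m, r ≤ m → φ m = 0) :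
    ∑ c ∈ range r, ∑ d ∈ range r, φ (c + d) * ψ c d =
      ∑ m ∈ range r, φ m * ∑ p ∈ antidiagonal m, ψ p.1 p.2 := by
  have hdiag : ∀ m, φ m * ∑ p ∈ antidiagonal m, ψ p.1 p.2 =
      ∑ i ∈ range (m + 1), φ (i + (m - i)) * ψ i (m - i) := by
    intro m
    rw [mul_sum, ← Nat.sum_antidiagonal_eq_sum_range_succ (fun i j => φ (i + j) * ψ i j)]
    exact sum_congr rfl fun p hp => by rw [mem_antidiagonal.1 hp]
  simp_rw [hdiag]
  rw [sum_range_diag_flip r (fun i j => φ (i + j) * ψ i j)]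
  refine sum_congr rfl fun c _ => (sum_subset (range_subset_range.2 (Nat.sub_le r c)) ?_).symm
  intro d _ hd
  rw [hφ _ (by rw [mem_range] at hd; omega), zero_mul]

end Finset

theorem fwdDiff_iter_choose_eq_zero {K n : ℕ} (h : K < n) :
    (fwdDiff 1)^[n] (fun x ↦ x.choose K : ℕ → ℤ) = 0 := by
  obtain ⟨j, rfl⟩ := Nat.exists_eq_add_of_lt h
  have hK : (fwdDiff 1)^[K] (fun x ↦ x.choose K : ℕ → ℤ) = fun _ ↦ 1 := by
    simpa using fwdDiff_iter_choose 0 K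
  rw [show K + j + 1 = j + 1 + K by ring, Function.iterate_add_apply, hK,
    Function.iterate_succ_apply, fwdDiff_const]
  ext x
  simp [fwdDiff_iter_eq_sum_shift]

theorem alternating_sum_range_choose_mul_choose_add {n K : ℕ} (a : ℕ) (hK : K < n) :
    ∑ i ∈ range (n + 1), (-1 : ℚ) ^ i * n.choose i * (i + a).choose K = 0 := by
  have hΔ := congrFun (fwdDiff_iter_choose_eq_zero hK) a
  rw [← zero_add a, ← fwdDiff_iter_comp_add, fwdDiff_iter_eq_sum_shift] at hΔ
  have hΔ' : ∑ i ∈ range (n + 1), (-1 : ℚ) ^ (n - i) * n.choose i * (i + a).choose K = 0 := by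
    simpa using congrArg (Int.cast : ℤ → ℚ) hΔ
  rw [← mul_eq_zero_of_right ((-1 : ℚ) ^ n) hΔ', mul_sum]
  refine sum_congr rfl fun i hi => ?_
  obtain ⟨t, rfl⟩ := Nat.exists_eq_add_of_le (Nat.le_of_lt_succ (mem_range.1 hi))
  have hsign : (-1 : ℚ) ^ (i + t) * (-1) ^ t = (-1) ^ i := by
    rw [pow_add, mul_assoc, ← pow_add, Even.neg_one_pow ⟨t, rfl⟩, mul_one]
  rw [Nat.add_sub_cancel_left, ← hsign]
  ring

theorem alternating_sum_range_choose_mul_choose_mul_choose {r K h : ℕ} (hh : 1 ≤ h)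
    (hKh : K + h < r) :
    ∑ m ∈ range r, (-1 : ℚ) ^ m * m.choose K * (m + 1).choose h * r.choose (m + 1) = 0 := by
  obtain ⟨h, rfl⟩ := Nat.exists_eq_add_of_le' hh
  obtain ⟨n, rfl⟩ := Nat.exists_eq_add_of_lt hKh
  have hlow : ∀ m ∈ range h,
      (-1 : ℚ) ^ m * m.choose K * (m + 1).choose (h + 1) * (h + (K + n + 2)).choose (m + 1) = 0 :=
    fun m hm => by
      rw [Nat.choose_eq_zero_of_lt (by rw [mem_range] at hm; omega : m + 1 < h + 1)]
      simp
  rw [show K + (h + 1) + n + 1 = h + (K + n + 2) by ring, sum_range_add, sum_eq_zero hlow,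
    zero_add]
  have hterm : ∀ i, (-1 : ℚ) ^ (h + i) * (h + i).choose K * (h + i + 1).choose (h + 1) *
      (h + (K + n + 2)).choose (h + i + 1) =
      (-1) ^ h * (h + (K + n + 2)).choose (h + 1) *
        ((-1) ^ i * (K + n + 1).choose i * (i + h).choose K) := by
    intro i
    have hc := Nat.choose_mul (n := h + (K + n + 2)) (k := h + i + 1) (s := h + 1) (by omega)
    rw [show h + (K + n + 2) - (h + 1) = K + n + 1 by omega,
      show h + i + 1 - (h + 1) = i by omega] at hc
    have hc' : ((h + (K + n + 2)).choose (h + i + 1) : ℚ) * (h + i + 1).choose (h + 1) =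
        (h + (K + n + 2)).choose (h + 1) * (K + n + 1).choose i := by exact_mod_cast hc
    rw [pow_add, add_comm i h]
    linear_combination ((-1 : ℚ) ^ h * (-1) ^ i * (h + i).choose K) * hc'
  simp_rw [hterm, ← mul_sum]
  rw [alternating_sum_range_choose_mul_choose_add h (by omega), mul_zero]

theorem alternating_sum_range_choose_div_mul_choose {r K h : ℕ} (hh : 1 ≤ h) (hK : 1 ≤ K)
    (hKh : K + h ≤ r) :
    ∑ m ∈ range r, (-1 : ℚ) ^ m * (m + 1).choose h * r.choose (m + 1) / ((m + 1) * (m + 2)) *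
      (m + 2).choose (K + 1) = 0 := by
  obtain ⟨K, rfl⟩ := Nat.exists_eq_add_of_le' hK
  have hterm : ∀ m : ℕ, (-1 : ℚ) ^ m * (m + 1).choose h * r.choose (m + 1) /
      ((m + 1) * (m + 2)) * (m + 2).choose (K + 1 + 1) = 1 / ((K + 1) * (K + 2)) *
        ((-1 : ℚ) ^ m * m.choose K * (m + 1).choose h * r.choose (m + 1)) := by
    intro m
    rw [div_mul_eq_mul_div, mul_div_assoc, Nat.cast_choose_add_two_div m K]
    ring
  rw [sum_congr rfl fun m _ => hterm m, ← mul_sum,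
    alternating_sum_range_choose_mul_choose_mul_choose hh (by omega : K + h < r), mul_zero]

theorem alternating_sum_range_choose_div_mul_add_eq_zero {r k l h : ℕ} (hh : 1 ≤ h)
    (hklh : k + l + h < r) :
    ∑ m ∈ range r, (-1 : ℚ) ^ m * (m + 1).choose h * r.choose (m + 1) / ((m + 1) * (m + 2)) *
      ((l + 1) * (m + 2).choose (k + l + 2) + l * (m + 2).choose (k + l + 1)) = 0 := by
  simp only [mul_add (_ / _ : ℚ), sum_add_distrib, mul_left_comm _ ((l : ℚ) + 1),
    mul_left_comm _ (l : ℚ), ← mul_sum]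
  rw [alternating_sum_range_choose_div_mul_choose hh (K := k + l + 1) (by omega) (by omega),
    mul_zero, zero_add]
  rcases Nat.eq_zero_or_pos l with rfl | hl
  · rw [Nat.cast_zero, zero_mul]
  · rw [alternating_sum_range_choose_div_mul_choose hh (by omega) (by omega), mul_zero]

theorem sum_Icc_sum_Icc_weight_mul_choose_mul_choose (r c d : ℕ) :
    ∑ s ∈ Icc 1 r, ∑ j ∈ Icc 1 s,
        ((s : ℚ) + 1 - j) / (s * (s + 1)) * ((j - 1).choose c * (s - j).choose d) =
      (d + 1) * r.choose (c + d + 1) / ((c + d + 1) * (c + d + 2)) := by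
  have hinner : ∀ n : ℕ, ∑ j ∈ Icc 1 (n + 1),
      ((((n + 1 : ℕ) : ℚ) + 1 - j) / ((n + 1 : ℕ) * ((n + 1 : ℕ) + 1)) *
        ((j - 1).choose c * (n + 1 - j).choose d)) =
      (d + 1) * n.choose (c + d) / ((c + d + 1) * (c + d + 2)) := by
    intro n
    have hnat := Nat.sum_antidiagonal_succ_mul_choose_mul_choose c d n
    rw [Nat.sum_antidiagonal_eq_sum_range_succ (fun i j => (j + 1) * (i.choose c * j.choose d))]
      at hnat
    have hratio := Nat.cast_choose_add_two_div n (c + d)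
    push_cast at hratio
    calc _ = ∑ i ∈ range (n + 1),
          (((n - i + 1) * (i.choose c * (n - i).choose d) : ℕ) : ℚ) / ((n + 1) * (n + 2)) := by
          rw [sum_Icc_one_eq_sum_range]
          refine sum_congr rfl fun i hi => ?_
          have hin : i ≤ n := Nat.lt_succ_iff.1 (mem_range.1 hi)
          rw [Nat.add_sub_cancel, Nat.add_sub_add_right]
          push_cast [hin]
          ring
      _ = (d + 1) * ((n + 2).choose (c + d + 2) / ((n + 1) * (n + 2))) := by
          rw [← sum_div, ← Nat.cast_sum, hnat]
          push_cast
          ring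
      _ = _ := by rw [hratio]; ring
  rw [sum_Icc_one_eq_sum_range]
  simp_rw [hinner, ← sum_div, ← mul_sum]
  exact_mod_cast congrArg (fun x : ℕ => ((d + 1) * x : ℚ) / ((c + d + 1) * (c + d + 2)))
    (Nat.sum_range_choose_eq_choose_succ r (c + d))

theorem sum_Icc_sum_Icc_weight_mul_sum_choose_mul_choose (r : ℕ) (f : ℕ → ℕ → ℚ) :
    ∑ s ∈ Icc 1 r, ∑ j ∈ Icc 1 s, ((s : ℚ) + 1 - j) / (s * (s + 1)) *
        ∑ c ∈ range j, ∑ d ∈ range (s - j + 1), ((j - 1).choose c * ((s - j).choose d * f c d)) =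
      ∑ c ∈ range r, ∑ d ∈ range r,
        (d + 1) * r.choose (c + d + 1) / ((c + d + 1) * (c + d + 2)) * f c d := by
  calc _ = ∑ s ∈ Icc 1 r, ∑ j ∈ Icc 1 s, ((s : ℚ) + 1 - j) / (s * (s + 1)) *
        ∑ c ∈ range r, ∑ d ∈ range r, ((j - 1).choose c * ((s - j).choose d * f c d)) := by
        refine sum_congr rfl fun s hs => sum_congr rfl fun j hj => ?_
        simp only [mem_Icc] at hs hj
        simp only [← mul_sum]
        rw [sum_range_choose_mul_of_lt (a := j - 1) (n := j) (N := r) (by omega) (by omega)]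
        simp only [sum_range_choose_mul_of_lt (a := s - j) (n := s - j + 1) (N := r) (by omega)
          (by omega)]
    _ = ∑ c ∈ range r, ∑ d ∈ range r, ∑ s ∈ Icc 1 r, ∑ j ∈ Icc 1 s,
          ((s : ℚ) + 1 - j) / (s * (s + 1)) * ((j - 1).choose c * (s - j).choose d) * f c d := by
        simp only [mul_sum, mul_assoc]
        exact (sum_congr rfl fun s _ => sum_comm.trans (sum_congr rfl fun c _ => sum_comm)).trans
          (sum_comm.trans (sum_congr rfl fun c _ => sum_comm))
    _ = _ := by
        simp only [← sum_mul, sum_Icc_sum_Icc_weight_mul_choose_mul_choose]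

theorem stmt_0_general (r k l h : ℕ) (hh : 1 ≤ h) (hklh : k + l + h ≤ r - 1) :
    ∑ s ∈ Finset.Icc 1 r, ∑ j ∈ Finset.Icc 1 s,
      (((s : ℚ) + 1 - (j : ℚ)) / ((s : ℚ) * ((s : ℚ) + 1))) *
        ∑ c ∈ Finset.range j, ∑ d ∈ Finset.range (s - j + 1),
          (-1 : ℚ) ^ (c + d) * (Nat.choose (j - 1) c : ℚ) * (Nat.choose (s - j) d : ℚ) *
            (Nat.choose c k : ℚ) * (Nat.choose (d + 1) l : ℚ) *
            (Nat.choose (c + d + 1) h : ℚ) = 0 := by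
  have hφ : ∀ m, r ≤ m → (-1 : ℚ) ^ m * (m + 1).choose h * r.choose (m + 1) /
      ((m + 1) * (m + 2)) = 0 := fun m hm => by
    rw [Nat.choose_eq_zero_of_lt (by omega : r < m + 1)]
    simp
  calc _ = ∑ s ∈ Icc 1 r, ∑ j ∈ Icc 1 s, ((s : ℚ) + 1 - j) / (s * (s + 1)) *
        ∑ c ∈ range j, ∑ d ∈ range (s - j + 1), ((j - 1).choose c * ((s - j).choose d *
          ((-1 : ℚ) ^ (c + d) * c.choose k * (d + 1).choose l * (c + d + 1).choose h))) := by
        simp only [mul_assoc, mul_left_comm _ ((-1 : ℚ) ^ _)]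
    _ = ∑ c ∈ range r, ∑ d ∈ range r, (-1 : ℚ) ^ (c + d) * (c + d + 1).choose h *
          r.choose (c + d + 1) / ((c + d + 1) * (c + d + 2)) *
          (c.choose k * ((d + 1) * (d + 1).choose l)) := by
        rw [sum_Icc_sum_Icc_weight_mul_sum_choose_mul_choose]
        exact sum_congr rfl fun c _ => sum_congr rfl fun d _ => by ring
    _ = ∑ m ∈ range r, (-1 : ℚ) ^ m * (m + 1).choose h * r.choose (m + 1) / ((m + 1) * (m + 2)) *
          ((l + 1) * (m + 2).choose (k + l + 2) + l * (m + 2).choose (k + l + 1)) := by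
        convert sum_range_sum_range_mul_eq_sum_antidiagonal _
          (fun c d => (c.choose k * ((d + 1) * (d + 1).choose l) : ℚ)) hφ using 1
        · push_cast
          rfl
        · refine sum_congr rfl fun m _ => congrArg _ ?_
          exact_mod_cast (Nat.sum_antidiagonal_choose_mul_succ_mul_choose k l m).symm
    _ = 0 := alternating_sum_range_choose_div_mul_add_eq_zero hh (by omega)

/-- **Lemma on vanishing binomial sums (senary relation key lemma).**
For integers `r ≥ 2`, `h ≥ 1`, `k, l ≥ 0` with `k + l + h ≤ r - 1`, the rational number
`F(r,k,l,h) = Σ_{1 ≤ j ≤ s ≤ r} ((s+1-j)/(s(s+1))) Σ_{0 ≤ c ≤ j-1} Σ_{0 ≤ d ≤ s-j}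
  (-1)^(c+d) C(j-1,c) C(s-j,d) C(c,k) C(d+1,l) C(c+d+1,h)` vanishes. -/
theorem stmt_0 (r k l h : ℕ) (hr : 2 ≤ r) (hh : 1 ≤ h) (hklh : k + l + h ≤ r - 1) :
    ∑ s ∈ Finset.Icc 1 r, ∑ j ∈ Finset.Icc 1 s,
      (((s : ℚ) + 1 - (j : ℚ)) / ((s : ℚ) * ((s : ℚ) + 1))) *
        ∑ c ∈ Finset.range j, ∑ d ∈ Finset.range (s - j + 1),
          (-1 : ℚ) ^ (c + d) * (Nat.choose (j - 1) c : ℚ) * (Nat.choose (s - j) d : ℚ) *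
            (Nat.choose c k : ℚ) * (Nat.choose (d + 1) l : ℚ) *
            (Nat.choose (c + d + 1) h : ℚ) = 0 :=
  stmt_0_general r k l h hh hklh
end

section
/- For all nonnegative integers n, k, l, one has Σ_{d=0}^{n} (d+1) · C(d+1,l) · C(n−d,k) = l · C(n+2, k+l+1) + (l+1) · C(n+2, k+l+2). -/
/-!
Split `(d+1) C(d+1,l) = l C(d+1,l) + (l+1) C(d+1,l+1)`; both resulting sums are instances of the
dual Vandermonde identity `∑_{i+j=m} C(i,l) C(j,k) = C(m+1,k+l+1)`, which follows by induction on
`m` from Pascal's rule.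
-/

open Finset

namespace Nat

theorem sum_antidiagonal_choose_mul_choose_s2 (k l m : ℕ) :
    ∑ ij ∈ antidiagonal m, ij.1.choose l * ij.2.choose k = (m + 1).choose (k + l + 1) := by
  induction m generalizing l with
  | zero => cases k <;> cases l <;> simp [choose_eq_zero_of_lt]
  | succ m ih =>
    rw [Finset.Nat.sum_antidiagonal_succ]
    cases l with
    | zero =>
      have h0 := ih 0
      simp only [choose_zero_right, one_mul, add_zero] at h0 ⊢
      rw [h0, choose_succ_succ (m + 1) k]
    | succ l =>
      rw [choose_zero_succ, zero_mul, zero_add, choose_succ_succ' (m + 1)]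
      simp only [choose_succ_succ' _ l, add_mul, sum_add_distrib, ih]
      rfl

theorem sum_range_choose_succ_mul_choose_sub (k l n : ℕ) :
    ∑ d ∈ range (n + 1), (d + 1).choose (l + 1) * (n - d).choose k
      = (n + 2).choose (k + l + 2) := by
  have h := sum_antidiagonal_choose_mul_choose_s2 k (l + 1) (n + 1)
  rwa [Finset.Nat.sum_antidiagonal_succ, choose_zero_succ, zero_mul, zero_add,
    Finset.Nat.sum_antidiagonal_eq_sum_range_succ_mk] at h

theorem mul_choose_eq_mul_choose_add_succ_mul_choose_succ (n s : ℕ) :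
    n * n.choose s = s * n.choose s + (s + 1) * n.choose (s + 1) := by
  rw [mul_comm (s + 1), choose_succ_right_eq]
  rcases le_or_gt s n with h | h
  · obtain ⟨t, rfl⟩ := exists_add_of_le h
    rw [Nat.add_sub_cancel_left]
    ring
  · simp [choose_eq_zero_of_lt h]

end Nat

/-- `Σ_{d=0}^{n} (d+1) C(d+1,l) C(n-d,k) = l C(n+2,k+l+1) + (l+1) C(n+2,k+l+2)`. -/
theorem stmt_2 (n k l : ℕ) :
    ∑ d ∈ Finset.range (n + 1), (d + 1) * Nat.choose (d + 1) l * Nat.choose (n - d) k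
      = l * Nat.choose (n + 2) (k + l + 1) + (l + 1) * Nat.choose (n + 2) (k + l + 2) := by
  have hl : l * ∑ d ∈ range (n + 1), (d + 1).choose l * (n - d).choose k
      = l * (n + 2).choose (k + l + 1) := by
    cases l with
    | zero => simp
    | succ l => rw [Nat.sum_range_choose_succ_mul_choose_sub]; rfl
  rw [← hl, ← Nat.sum_range_choose_succ_mul_choose_sub, mul_sum, mul_sum, ← sum_add_distrib]
  refine sum_congr rfl fun d _ => ?_
  rw [Nat.mul_choose_eq_mul_choose_add_succ_mul_choose_succ]
  ring
end

section
/- For all bimoulds A and B and every sequence w = ((u_1,v_1),…,(u_r,v_r)), one has swamu(A,B)(w) = Σ_{j=0}^{r} A(b_j) · B(a_j), where: for 1 ≤ j ≤ r−1, a_j = ((u_1, v_1−v_{j+1}), …, (u_j, v_j−v_{j+1})) and b_j = ((u_1+⋯+u_{j+1}, v_{j+1}), (u_{j+2}, v_{j+2}), …, (u_r, v_r)); for j = 0, a_0 = ∅ and b_0 = w; and for j = r, a_r = w and b_r = ∅. -/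
/-- A bimould: a function assigning to every finite sequence of pairs `(u, v)` of
elements of `K` an element of `R`. -/
abbrev Bimould (K R : Type*) := List (K × K) → R

variable {K R : Type*} [CommRing K] [CommRing R]

/-- The (non-commutative) mould product `mu`:
`mu(A,B)(w) = Σ_{w = a·b} A(a) B(b)` over all prefix/suffix decompositions of `w`. -/
def mu (A B : Bimould K R) : Bimould K R :=
  fun w => ∑ i ∈ Finset.range (w.length + 1), A (w.take i) * B (w.drop i)

/-- The sequence transformation underlying `swap`: for `w = ((u_1,v_1),…,(u_r,v_r))` it
returns `((v_r, u_1+⋯+u_r), (v_{r-1}-v_r, u_1+⋯+u_{r-1}), …, (v_1-v_2, u_1))`. -/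
def swapSeq (w : List (K × K)) : List (K × K) :=
  List.ofFn fun i : Fin w.length =>
    ((w.getD (w.length - 1 - (i : ℕ)) (0, 0)).2 - (w.getD (w.length - (i : ℕ)) (0, 0)).2,
      ((w.take (w.length - (i : ℕ))).map Prod.fst).sum)

/-- The involution `swap`. -/
def swap (A : Bimould K R) : Bimould K R := fun w => A (swapSeq w)

/-- The involution `anti`, reversing the sequence of letters. -/
def anti (A : Bimould K R) : Bimould K R := fun w => A w.reverse

/-- `swamu`, the `swap`-conjugation of `mu`. -/
def swamu (A B : Bimould K R) : Bimould K R := swap (mu (swap A) (swap B))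

/-- `answamu`, the `swap ∘ anti`-conjugation of `mu`. -/
def answamu (A B : Bimould K R) : Bimould K R :=
  anti (swap (mu (swap (anti A)) (swap (anti B))))

/-- The sequence `a_j = ((u_1, v_1 - v_{j+1}), …, (u_j, v_j - v_{j+1}))`, with the
conventions `a_0 = ∅` and `a_r = w`. -/
def aSeq (w : List (K × K)) (j : ℕ) : List (K × K) :=
  (w.take j).map fun p => (p.1, p.2 - (w.getD j (0, 0)).2)

/-- The sequence `b_j = ((u_1+⋯+u_{j+1}, v_{j+1}), (u_{j+2}, v_{j+2}), …, (u_r, v_r))`,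
with the conventions `b_0 = w` and `b_r = ∅`. -/
def bSeq (w : List (K × K)) (j : ℕ) : List (K × K) :=
  if j = w.length then []
  else (((w.take (j + 1)).map Prod.fst).sum, (w.getD j (0, 0)).2) :: w.drop (j + 1)

/-!
Write `U_k = u_1 + ⋯ + u_k`. In the coordinates `(U_k, v_k)` of a sequence (`cumul 0`), the map
`swapSeq` is simply reversal followed by exchanging the two components of every letter. A prefix of
a sequence has as coordinates the corresponding prefix, and a suffix the corresponding suffix with
its first components shifted by a constant. Swapping back the suffix and the prefix of `swapSeq w`
of lengths `j` and `r - j` therefore gives `a_j` and `b_j`; the shift for `a_j` is `v_{j+1}`, read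
off as a partial sum of first components of `swapSeq w` (which telescopes, with `v_{r+1} = 0`).
-/

section Cumul

variable {G α : Type*} [AddCommGroup G]

def cumul (s : G) : List (G × α) → List (G × α)
  | [] => []
  | p :: w => (s + p.1, p.2) :: cumul (s + p.1) w

def uncumul (s : G) : List (G × α) → List (G × α)
  | [] => []
  | p :: l => (p.1 - s, p.2) :: uncumul p.1 l

theorem uncumul_cumul (s : G) (w : List (G × α)) : uncumul s (cumul s w) = w := by
  induction w generalizing s with
  | nil => rfl
  | cons p w ih => simp [cumul, uncumul, ih]

theorem cumul_injective (s : G) : Function.Injective (cumul (α := α) s) :=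
  Function.LeftInverse.injective (g := uncumul s) (uncumul_cumul s)

@[simp]
theorem length_cumul (s : G) (w : List (G × α)) : (cumul s w).length = w.length := by
  induction w generalizing s <;> simp [cumul, *]

theorem getElem_cumul (s : G) (w : List (G × α)) (i : ℕ) (hi : i < (cumul s w).length) :
    (cumul s w)[i] =
      (s + ((w.take (i + 1)).map Prod.fst).sum, (w[i]'(by simpa using hi)).2) := by
  induction w generalizing s i with
  | nil => simp at hi
  | cons p w ih => cases i <;> simp [cumul, ih, add_assoc]

theorem take_cumul (s : G) (w : List (G × α)) (i : ℕ) :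
    (cumul s w).take i = cumul s (w.take i) := by
  induction w generalizing s i with
  | nil => simp [cumul]
  | cons p w ih => cases i <;> simp [cumul, ih]

theorem drop_cumul (s : G) (w : List (G × α)) (i : ℕ) :
    (cumul s w).drop i = cumul (s + ((w.take i).map Prod.fst).sum) (w.drop i) := by
  induction w generalizing s i with
  | nil => simp [cumul]
  | cons p w ih => cases i <;> simp [cumul, ih, add_assoc]

theorem cumul_add (t s : G) (w : List (G × α)) :
    cumul (t + s) w = (cumul s w).map fun p => (t + p.1, p.2) := by
  induction w generalizing s with
  | nil => rfl
  | cons p w ih => simp [cumul, ← ih, add_assoc]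

theorem cumul_drop (s : G) (w : List (G × α)) (i : ℕ) :
    cumul s (w.drop i) =
      ((cumul s w).drop i).map fun p => (p.1 - ((w.take i).map Prod.fst).sum, p.2) := by
  rw [drop_cumul, add_comm, cumul_add, List.map_map]
  simp [Function.comp_def]

theorem cumul_map_snd {β : Type*} (f : α → β) (s : G) (w : List (G × α)) :
    cumul s (w.map fun p => (p.1, f p.2)) = (cumul s w).map fun p => (p.1, f p.2) := by
  induction w generalizing s <;> simp [cumul, *]

end Cumul

@[simp]
theorem length_swapSeq (w : List (K × K)) : (swapSeq w).length = w.length := by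
  simp [swapSeq]

theorem getElem_swapSeq (w : List (K × K)) (i : ℕ) (hi : i < (swapSeq w).length) :
    (swapSeq w)[i] =
      ((w.getD (w.length - 1 - i) (0, 0)).2 - (w.getD (w.length - i) (0, 0)).2,
        ((w.take (w.length - i)).map Prod.fst).sum) := by
  simp [swapSeq]

theorem sum_fst_take_swapSeq (w : List (K × K)) {k : ℕ} (hk : k ≤ w.length) :
    (((swapSeq w).take k).map Prod.fst).sum = (w.getD (w.length - k) (0, 0)).2 := by
  induction k with
  | zero => simp
  | succ k ih =>
    have hk' : k < (swapSeq w).length := by simp; omega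
    rw [List.take_add_one, List.map_append, List.sum_append, ih (by omega),
      List.getElem?_eq_getElem hk', Option.toList_some, List.map_singleton, List.sum_singleton,
      getElem_swapSeq, show w.length - 1 - k = w.length - (k + 1) by omega]
    ring

theorem cumul_swapSeq (w : List (K × K)) :
    cumul 0 (swapSeq w) = ((cumul 0 w).map Prod.swap).reverse := by
  apply List.ext_getElem (by simp)
  intro i h₁ h₂
  have hi : i < w.length := by simpa using h₁
  rw [getElem_cumul, getElem_swapSeq, List.getElem_reverse, List.getElem_map, getElem_cumul,
    sum_fst_take_swapSeq w (by omega)]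
  simp only [List.length_map, length_cumul, zero_add, Prod.swap_prod_mk,
    show w.length - 1 - i + 1 = w.length - i by omega,
    show w.length - (i + 1) = w.length - 1 - i by omega,
    List.getD_eq_getElem _ _ (by omega : w.length - 1 - i < w.length)]

theorem swapSeq_take_swapSeq {w : List (K × K)} {j : ℕ} (hj : j ≤ w.length) :
    swapSeq ((swapSeq w).take (w.length - j)) = bSeq w j := by
  apply cumul_injective 0
  rw [cumul_swapSeq, ← take_cumul, cumul_swapSeq, List.take_reverse]
  simp only [List.length_map, length_cumul, Nat.sub_sub_self hj, List.map_reverse,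
    List.reverse_reverse, List.map_drop, List.map_map, Prod.swap_swap_eq, List.map_id]
  unfold bSeq
  split_ifs with hjr
  · simp [hjr, cumul]
  · have hjw : j < w.length := by omega
    rw [cumul, List.drop_eq_getElem_cons (by simpa using hjw), getElem_cumul, drop_cumul,
      List.getD_eq_getElem _ _ hjw]

theorem swapSeq_drop_swapSeq {w : List (K × K)} {j : ℕ} (hj : j ≤ w.length) :
    swapSeq ((swapSeq w).drop (w.length - j)) = aSeq w j := by
  apply cumul_injective 0
  rw [cumul_swapSeq, cumul_drop, cumul_swapSeq, sum_fst_take_swapSeq w (Nat.sub_le _ _),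
    List.drop_reverse, aSeq, cumul_map_snd (· - (w.getD j (0, 0)).2), ← take_cumul]
  simp only [List.length_map, length_cumul, Nat.sub_sub_self hj, List.map_reverse,
    List.reverse_reverse, List.map_take, List.map_map]
  rfl

/-- Explicit formula for `swamu`: `swamu(A,B)(w) = Σ_{j=0}^{r} A(b_j) B(a_j)`. -/
theorem stmt_4 (A B : Bimould K R) (w : List (K × K)) :
    swamu A B w = ∑ j ∈ Finset.range (w.length + 1), A (bSeq w j) * B (aSeq w j) := by
  rw [swamu, swap, mu, length_swapSeq, ← Finset.sum_range_reflect]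
  refine Finset.sum_congr rfl fun j hj => ?_
  have hj : j ≤ w.length := Nat.lt_succ_iff.mp (Finset.mem_range.mp hj)
  simp only [swap, add_tsub_cancel_right, swapSeq_take_swapSeq hj, swapSeq_drop_swapSeq hj]
end

section
/- For all bimoulds A and B and every sequence w = ((u_1,v_1),…,(u_r,v_r)), one has answamu(A,B)(w) = Σ_{j=0}^{r} A(a'_j) · B(b'_j), where: for 1 ≤ j ≤ r−1, a'_j = ((u_1,v_1), …, (u_{j−1},v_{j−1}), (u_j+u_{j+1}+⋯+u_r, v_j)) and b'_j = ((u_{j+1}, v_{j+1}−v_j), …, (u_r, v_r−v_j)); for j = 0, a'_0 = ∅ and b'_0 = w; and for j = r, a'_r = w and b'_r = ∅. -/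
variable {K R : Type*} [CommRing K] [CommRing R]

/-- The sequence `a'_j = ((u_1,v_1), …, (u_{j-1},v_{j-1}), (u_j+⋯+u_r, v_j))`, with the
conventions `a'_0 = ∅` and `a'_r = w`. -/
def aSeq' (w : List (K × K)) (j : ℕ) : List (K × K) :=
  if j = 0 then []
  else w.take (j - 1) ++
    [(((w.drop (j - 1)).map Prod.fst).sum, (w.getD (j - 1) (0, 0)).2)]

/-- The sequence `b'_j = ((u_{j+1}, v_{j+1} - v_j), …, (u_r, v_r - v_j))`, with the
conventions `b'_0 = w` and `b'_r = ∅`. -/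
def bSeq' (w : List (K × K)) (j : ℕ) : List (K × K) :=
  if j = 0 then w
  else (w.drop j).map fun p => (p.1, p.2 - (w.getD (j - 1) (0, 0)).2)

theorem List.getD_take_of_lt {α : Type*} (l : List α) (d : α) {k n : ℕ} (h : k < n) :
    (l.take n).getD k d = l.getD k d := by
  simp [List.getD_eq_getElem?_getD, h]

theorem List.getD_drop {α : Type*} (l : List α) (d : α) (i k : ℕ) :
    (l.drop i).getD k d = l.getD (i + k) d := by
  simp [List.getD_eq_getElem?_getD]

theorem sum_fst_drop_sub_sum_fst_drop_succ {α β : Type*} [AddCommGroup α] (l : List (α × β))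
    {k : ℕ} (hk : k < l.length) :
    ((l.drop k).map Prod.fst).sum - ((l.drop (k + 1)).map Prod.fst).sum = l[k].1 := by
  rw [List.drop_eq_getElem_cons hk, List.map_cons, List.sum_cons, add_sub_cancel_right]

theorem getElem_swapSeq_reverse (w : List (K × K)) (k : ℕ)
    (hk : k < (swapSeq w.reverse).length) :
    (swapSeq w.reverse)[k] =
      ((((0, 0) :: w).getD (k + 1) (0, 0)).2 - (((0, 0) :: w).getD k (0, 0)).2,
        ((w.drop k).map Prod.fst).sum) := by
  simp only [length_swapSeq, List.length_reverse] at hk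
  simp only [swapSeq, List.getElem_ofFn, List.length_reverse, Fin.val_cast, List.take_reverse,
    Nat.sub_sub_self hk.le, List.map_reverse, List.sum_reverse, List.getD_cons_succ]
  rw [List.getD_reverse _ (by omega), Nat.sub_sub_self (by omega)]
  rcases k with _ | k
  · simp
  · rw [List.getD_reverse _ (by omega), show w.length - 1 - (w.length - (k + 1)) = k by omega,
      List.getD_cons_succ]

theorem getElem_reverse_swapSeq (T : List (K × K)) (k : ℕ)
    (hk : k < (swapSeq T).reverse.length) :
    (swapSeq T).reverse[k] =
      ((T.getD k (0, 0)).2 - (T.getD (k + 1) (0, 0)).2, ((T.take (k + 1)).map Prod.fst).sum) := by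
  simp only [List.length_reverse, length_swapSeq] at hk
  rw [List.getElem_reverse]
  simp only [swapSeq, List.getElem_ofFn, List.length_ofFn]
  rw [Nat.sub_sub_self (by omega), show T.length - (T.length - 1 - k) = k + 1 by omega]

theorem getD_swapSeq_reverse_snd (w : List (K × K)) (k : ℕ) :
    ((swapSeq w.reverse).getD k (0, 0)).2 = ((w.drop k).map Prod.fst).sum := by
  rcases lt_or_ge k w.length with hk | hk
  · rw [List.getD_eq_getElem _ _ (by simpa), getElem_swapSeq_reverse]
  · rw [List.getD_eq_default _ _ (by simpa), List.drop_eq_nil_of_le hk]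
    rfl

theorem sum_fst_take_swapSeq_reverse (w : List (K × K)) {n : ℕ} (hn : n ≤ w.length) :
    (((swapSeq w.reverse).take n).map Prod.fst).sum = (((0, 0) :: w).getD n (0, 0)).2 := by
  induction n with
  | zero => rfl
  | succ n ih =>
    rw [List.map_take, List.sum_take_succ _ _ (by simpa using hn), ← List.map_take, ih (by omega),
      List.getElem_map, getElem_swapSeq_reverse]
    ring

theorem reverse_swapSeq_take_swapSeq_reverse (w : List (K × K)) {i : ℕ} (hi : i ≤ w.length) :
    (swapSeq ((swapSeq w.reverse).take i)).reverse = aSeq' w i := by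
  rcases i with _ | j
  · rfl
  have ha : aSeq' w (j + 1) = w.take j ++ [(((w.drop j).map Prod.fst).sum, (w.getD j (0, 0)).2)] :=
    rfl
  rw [ha]
  refine List.ext_getElem (by simp; omega) fun k hk _ => ?_
  simp only [List.length_reverse, length_swapSeq, List.length_take, List.length_reverse] at hk
  rw [getElem_reverse_swapSeq, List.take_take, min_eq_left (by omega),
    sum_fst_take_swapSeq_reverse w (by omega), List.getD_cons_succ,
    List.getD_take_of_lt _ _ (by omega), getD_swapSeq_reverse_snd]
  rcases Nat.lt_or_ge k j with hkj | hkj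
  · rw [List.getElem_append_left (by simp; omega), List.getElem_take,
      List.getD_take_of_lt _ _ (by omega), getD_swapSeq_reverse_snd,
      sum_fst_drop_sub_sum_fst_drop_succ w (by omega), List.getD_eq_getElem _ _ (by omega)]
  · obtain rfl : k = j := by omega
    rw [List.getElem_append_right (by simp), List.getD_eq_default _ _ (by simp)]
    simp

theorem bSeq'_eq_map_drop (w : List (K × K)) (i : ℕ) :
    bSeq' w i = (w.drop i).map fun p => (p.1, p.2 - (((0, 0) :: w).getD i (0, 0)).2) := by
  rcases i with _ | i
  · simp [bSeq']
  · rfl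

theorem reverse_swapSeq_drop_swapSeq_reverse (w : List (K × K)) (i : ℕ) :
    (swapSeq ((swapSeq w.reverse).drop i)).reverse = bSeq' w i := by
  rw [bSeq'_eq_map_drop]
  refine List.ext_getElem (by simp) fun k hk _ => ?_
  simp only [List.length_reverse, length_swapSeq, List.length_drop, List.length_reverse] at hk
  have hsum := sum_fst_take_swapSeq_reverse w (n := i + (k + 1)) (by omega)
  rw [List.take_add, List.map_append, List.sum_append,
    sum_fst_take_swapSeq_reverse w (by omega)] at hsum
  rw [getElem_reverse_swapSeq, eq_sub_of_add_eq' hsum, List.getD_drop, List.getD_drop,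
    getD_swapSeq_reverse_snd, getD_swapSeq_reverse_snd, ← add_assoc,
    sum_fst_drop_sub_sum_fst_drop_succ w (by omega), List.getElem_map, List.getElem_drop,
    List.getD_cons_succ, List.getD_eq_getElem _ _ (by omega)]

/-- Explicit formula for `answamu`: `answamu(A,B)(w) = Σ_{j=0}^{r} A(a'_j) B(b'_j)`. -/
theorem stmt_5 (A B : Bimould K R) (w : List (K × K)) :
    answamu A B w = ∑ j ∈ Finset.range (w.length + 1), A (aSeq' w j) * B (bSeq' w j) := by
  simp only [answamu, anti, swap, mu, length_swapSeq, List.length_reverse]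
  refine Finset.sum_congr rfl fun i hi => ?_
  rw [reverse_swapSeq_take_swapSeq_reverse w (Finset.mem_range_succ_iff.mp hi),
    reverse_swapSeq_drop_swapSeq_reverse]
end

section
/- For all bimoulds A, B, C such that A(∅) = 0, one has swamu(answamu(A,B), C) = answamu(swamu(A,C), B). -/
variable {K R : Type*} [CommRing K] [CommRing R]

/-!
Write `⌈b` for `b` with the `u`-sum of a left neighbour `a` added to its first `u`, and `a⌉` for
`a` with the `v` of the first letter of a right neighbour `b` subtracted from all its `v`'s.
A direct computation shows `swapSeq (a ++ b) = swapSeq ⌈b ++ swapSeq a⌉`; as `swapSeq` is an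
involution, this gives `swamu(A,B)(a·b) = Σ A(⌈b) B(a⌉)`, and mirror-symmetrically
`answamu(A,B)(a·b) = Σ A(a⌈) B(⌉b)` with the flexions acting at the other end.
Both sides of the identity thus expand into sums over factorisations `w = a·b·c`, with terms
`A(⌈b⌈) B(⌉c) C(a⌉)`: the two flexions of the middle factor act at opposite ends of `b` and
commute, and the outer factors only see the untouched end letters of `b`. When `b = ∅` both
terms contain `A(∅) = 0`.
-/

theorem List.exists_eq_append_cons_of_lt {α : Type*} {w : List α} {j : ℕ}
    (h : j < w.length) : ∃ a x c, w = a ++ x :: c ∧ a.length = j :=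
  ⟨w.take j, w[j], w.drop (j + 1), by simp, by simp; omega⟩

theorem List.exists_eq_append_cons_or_of_add_lt {α : Type*} {w : List α} {j t : ℕ}
    (h : j + t < w.length) :
    (∃ a x c, w = a ++ x :: c ∧ a.length = j ∧ c.length = t) ∨
      ∃ a x m y c, w = a ++ x :: (m ++ y :: c) ∧ a.length = j ∧ c.length = t := by
  obtain ⟨a, x, b, rfl, rfl⟩ := exists_eq_append_cons_of_lt (show j < w.length by omega)
  simp only [length_append, length_cons] at h
  rcases (show t = b.length ∨ t < b.length by omega) with rfl | ht
  · exact Or.inl ⟨a, x, b, rfl, rfl, rfl⟩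
  · obtain ⟨m, y, c, rfl, hm⟩ :=
      exists_eq_append_cons_of_lt (show b.length - 1 - t < b.length by omega)
    simp only [length_append, length_cons] at hm ht
    exact Or.inr ⟨a, x, m, y, c, rfl, rfl, by omega⟩

namespace Bimould

section SumFst

variable {G : Type*} [AddCommMonoid G]

def sumFst (w : List (G × G)) : G := (w.map Prod.fst).sum

@[simp] lemma sumFst_nil : sumFst ([] : List (G × G)) = 0 := rfl

@[simp] lemma sumFst_cons (x : G × G) (w : List (G × G)) : sumFst (x :: w) = x.1 + sumFst w := by
  simp [sumFst]

@[simp] lemma sumFst_append (a b : List (G × G)) : sumFst (a ++ b) = sumFst a + sumFst b := by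
  simp [sumFst]

@[simp] lemma sumFst_reverse (w : List (G × G)) : sumFst w.reverse = sumFst w := by
  simp [sumFst, List.sum_reverse]

@[simp] lemma sumFst_map_fst_snd (f : G × G → G) (w : List (G × G)) :
    sumFst (w.map fun q => (q.1, f q)) = sumFst w := by
  simp [sumFst, Function.comp_def]

end SumFst

section Flexions

variable {G : Type*} [AddCommGroup G]

/-- For `w = a ++ b` with `a.length = j`, `mergeHead j w` is `⌈b` and `shiftPrefix j w` is `a⌉`
(a shift by `0` when `b = []`). -/
def mergeHead (j : ℕ) (w : List (G × G)) : List (G × G) :=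
  match w.drop j with
  | [] => []
  | x :: c => (sumFst (w.take j) + x.1, x.2) :: c

def shiftPrefix (j : ℕ) (w : List (G × G)) : List (G × G) :=
  (w.take j).map fun p => (p.1, p.2 - ((w.drop j).headD (0, 0)).2)

/-- The mirror images, indexed by the length `t` of the right factor. -/
def mergeTail (t : ℕ) (w : List (G × G)) : List (G × G) := (mergeHead t w.reverse).reverse

def shiftSuffix (t : ℕ) (w : List (G × G)) : List (G × G) := (shiftPrefix t w.reverse).reverse

@[simp] lemma length_mergeHead (j : ℕ) (w : List (G × G)) :
    (mergeHead j w).length = w.length - j := by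
  rw [mergeHead]
  split <;> rename_i h <;> simpa using (congrArg List.length h).symm

@[simp] lemma length_mergeTail (t : ℕ) (w : List (G × G)) :
    (mergeTail t w).length = w.length - t := by
  simp [mergeTail]

lemma mergeHead_of_length_le {j : ℕ} {w : List (G × G)} (h : w.length ≤ j) :
    mergeHead j w = [] :=
  List.eq_nil_of_length_eq_zero (by simp; omega)

lemma mergeTail_of_length_le {t : ℕ} {w : List (G × G)} (h : w.length ≤ t) :
    mergeTail t w = [] :=
  List.eq_nil_of_length_eq_zero (by simp; omega)

lemma mergeHead_append_cons (a c : List (G × G)) (x : G × G) :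
    mergeHead a.length (a ++ x :: c) = (sumFst a + x.1, x.2) :: c := by
  simp [mergeHead]

lemma shiftPrefix_append_cons (a c : List (G × G)) (x : G × G) :
    shiftPrefix a.length (a ++ x :: c) = a.map fun p => (p.1, p.2 - x.2) := by
  simp [shiftPrefix]

lemma mergeTail_append_cons (a c : List (G × G)) (x : G × G) :
    mergeTail c.length (a ++ x :: c) = a ++ [(sumFst c + x.1, x.2)] := by
  rw [mergeTail, List.reverse_append, List.reverse_cons, List.append_assoc, ← List.length_reverse,
    List.singleton_append, mergeHead_append_cons]
  simp

lemma shiftSuffix_append_cons (a c : List (G × G)) (x : G × G) :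
    shiftSuffix c.length (a ++ x :: c) = c.map fun p => (p.1, p.2 - x.2) := by
  rw [shiftSuffix, List.reverse_append, List.reverse_cons, List.append_assoc,
    ← List.length_reverse, List.singleton_append, shiftPrefix_append_cons, List.map_reverse, List.reverse_reverse]

lemma mergeTail_cons (c : List (G × G)) (x : G × G) :
    mergeTail c.length (x :: c) = [(sumFst c + x.1, x.2)] :=
  mergeTail_append_cons [] c x

lemma shiftSuffix_cons (c : List (G × G)) (x : G × G) :
    shiftSuffix c.length (x :: c) = c.map fun p => (p.1, p.2 - x.2) :=
  shiftSuffix_append_cons [] c x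

lemma mergeTail_append_cons_append_cons (a m c : List (G × G)) (x y : G × G) :
    mergeTail c.length (a ++ x :: (m ++ y :: c)) = a ++ x :: (m ++ [(sumFst c + y.1, y.2)]) := by
  simpa using mergeTail_append_cons (a ++ x :: m) c y

lemma shiftSuffix_append_cons_append_cons (a m c : List (G × G)) (x y : G × G) :
    shiftSuffix c.length (a ++ x :: (m ++ y :: c)) = c.map fun p => (p.1, p.2 - y.2) := by
  simpa using shiftSuffix_append_cons (a ++ x :: m) c y

lemma mergeTail_mergeHead {j t : ℕ} {w : List (G × G)} (h : j + t < w.length) :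
    mergeTail t (mergeHead j w) = mergeHead j (mergeTail t w) := by
  rcases List.exists_eq_append_cons_or_of_add_lt h with
    ⟨a, x, c, rfl, rfl, rfl⟩ | ⟨a, x, m, y, c, rfl, rfl, rfl⟩
  · rw [mergeHead_append_cons, mergeTail_cons, mergeTail_append_cons, mergeHead_append_cons,
      add_left_comm]
  · rw [mergeHead_append_cons, ← List.cons_append, mergeTail_append_cons,
      mergeTail_append_cons_append_cons, mergeHead_append_cons, List.cons_append]

lemma shiftSuffix_mergeHead {j t : ℕ} {w : List (G × G)} (h : j + t < w.length) :
    shiftSuffix t (mergeHead j w) = shiftSuffix t w := by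
  rcases List.exists_eq_append_cons_or_of_add_lt h with
    ⟨a, x, c, rfl, rfl, rfl⟩ | ⟨a, x, m, y, c, rfl, rfl, rfl⟩
  · rw [mergeHead_append_cons, shiftSuffix_cons, shiftSuffix_append_cons]
  · rw [mergeHead_append_cons, ← List.cons_append, shiftSuffix_append_cons,
      shiftSuffix_append_cons_append_cons]

lemma shiftPrefix_mergeTail {j t : ℕ} {w : List (G × G)} (h : j + t < w.length) :
    shiftPrefix j (mergeTail t w) = shiftPrefix j w := by
  rcases List.exists_eq_append_cons_or_of_add_lt h with
    ⟨a, x, c, rfl, rfl, rfl⟩ | ⟨a, x, m, y, c, rfl, rfl, rfl⟩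
  · rw [mergeTail_append_cons, shiftPrefix_append_cons, shiftPrefix_append_cons]
  · rw [mergeTail_append_cons_append_cons, shiftPrefix_append_cons, shiftPrefix_append_cons]

end Flexions

@[simp] lemma swapSeq_nil : swapSeq ([] : List (K × K)) = [] := rfl

@[simp] lemma length_swapSeq (w : List (K × K)) : (swapSeq w).length = w.length := by
  simp [swapSeq]

lemma swapSeq_cons (x : K × K) (w : List (K × K)) :
    swapSeq (x :: w) = (swapSeq w).map (fun q => (q.1, q.2 + x.1)) ++
      [(x.2 - (w.headD (0, 0)).2, x.1)] := by
  rw [swapSeq, List.ofFn_succ_last, swapSeq, List.map_ofFn]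
  congr 1
  · congr 1
    funext i
    obtain ⟨k, hk⟩ : ∃ k, w.length - 1 - i = k := ⟨_, rfl⟩
    have h₁ : w.length - i = k + 1 := by omega
    have h₂ : w.length + 1 - i = k + 2 := by omega
    simp [hk, h₁, h₂, List.take_succ_cons]
    exact add_comm _ _
  · cases w <;> simp

lemma swapSeq_append (a b : List (K × K)) :
    swapSeq (a ++ b) = (swapSeq b).map (fun q => (q.1, q.2 + sumFst a)) ++
      swapSeq (a.map fun p => (p.1, p.2 - (b.headD (0, 0)).2)) := by
  induction a with
  | nil => simp
  | cons x a ih =>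
    rw [List.cons_append, swapSeq_cons, ih, List.map_cons, swapSeq_cons]
    cases a <;> simp [add_comm, add_left_comm]

lemma sumFst_swapSeq (w : List (K × K)) : sumFst (swapSeq w) = (w.headD (0, 0)).2 := by
  induction w with
  | nil => rfl
  | cons x w ih => simp [swapSeq_cons, ih]

lemma swapSeq_swapSeq (w : List (K × K)) : swapSeq (swapSeq w) = w := by
  induction w with
  | nil => rfl
  | cons x w ih =>
    rw [swapSeq_cons, swapSeq_append, List.map_map]
    simp [Function.comp_def, ih, swapSeq_cons, sumFst_swapSeq]

lemma swapSeq_mergeHead (j : ℕ) (w : List (K × K)) :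
    swapSeq (mergeHead j w) = (swapSeq (w.drop j)).map fun q => (q.1, q.2 + sumFst (w.take j)) := by
  rw [mergeHead]
  split <;> rename_i h <;> simp [h, swapSeq_cons, add_assoc, add_left_comm, add_comm]

lemma swapSeq_mergeHead_append_shiftPrefix (j : ℕ) (w : List (K × K)) :
    swapSeq (mergeHead j w) ++ swapSeq (shiftPrefix j w) = swapSeq w := by
  conv_rhs => rw [← List.take_append_drop j w]
  rw [swapSeq_append, swapSeq_mergeHead, shiftPrefix]

lemma swamu_apply (A B : Bimould K R) (w : List (K × K)) :
    swamu A B w =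
      ∑ j ∈ Finset.range (w.length + 1), A (mergeHead j w) * B (shiftPrefix j w) := by
  simp only [swamu, swap, mu, length_swapSeq]
  rw [← Finset.sum_range_reflect]
  refine Finset.sum_congr rfl fun j _ => ?_
  have hlen : (swapSeq (mergeHead j w)).length = w.length + 1 - 1 - j := by simp
  rw [← swapSeq_mergeHead_append_shiftPrefix j w, List.take_left' hlen, List.drop_left' hlen,
    swapSeq_swapSeq, swapSeq_swapSeq]

lemma answamu_apply (A B : Bimould K R) (w : List (K × K)) :
    answamu A B w =
      ∑ t ∈ Finset.range (w.length + 1), A (mergeTail t w) * B (shiftSuffix t w) := by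
  rw [show answamu A B w = swamu (anti A) (anti B) w.reverse from rfl, swamu_apply,
    List.length_reverse]
  rfl

end Bimould

open Bimould in
/-- For bimoulds `A, B, C` with `A(∅) = 0`,
`swamu(answamu(A,B), C) = answamu(swamu(A,C), B)`. -/
theorem stmt_8 (A B C : Bimould K R) (hA : A [] = 0) :
    swamu (answamu A B) C = answamu (swamu A C) B := by
  funext w
  simp only [swamu_apply, answamu_apply, Finset.sum_mul, length_mergeHead, length_mergeTail]
  rw [Finset.sum_comm' (t' := Finset.range (w.length + 1))
    (s' := fun t => Finset.range (w.length - t + 1))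
    (by intro j t; simp only [Finset.mem_range]; omega)]
  refine Finset.sum_congr rfl fun t _ => Finset.sum_congr rfl fun j hj => ?_
  rcases lt_or_ge (j + t) w.length with h | h
  · rw [mergeTail_mergeHead h, shiftSuffix_mergeHead h, shiftPrefix_mergeTail h, mul_right_comm]
  · rw [Finset.mem_range] at hj
    have hL : mergeTail t (mergeHead j w) = [] := mergeTail_of_length_le (by simp; omega)
    have hR : mergeHead j (mergeTail t w) = [] := mergeHead_of_length_le (by simp; omega)
    rw [hL, hR, hA, zero_mul, zero_mul, zero_mul, zero_mul]
end
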